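/- arXiv:1401.3367 — 3 statements merged into one kernel-verified Lean document; each statement's English description precedes it below -/
import Mathlib

section
/- Let V be a finite-dimensional vector space over K = GF(2) and f : V → V a nilpotent K-linear endomorphism. Suppose λ^R and λ^S are unrepeated elementary divisors of f (d(f,R) = d(f,S) = 1) with R + 1 < S, and let u and v be generators of V with e(u) = R and e(v) = S. If the integers s, q satisfy 0 < s ≤ R, s < q, and R − s < S − q, then the subspace X = ⟨f^{R−s}(u) + f^{S−q}(v)⟩^c is characteristic and not hyperinvariant. -/
open Module LinearMap

section Defs

variable {K V : Type*} [Field K] [AddCommGroup V] [Module K V]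

/-- `α` commutes with `f`. -/
def Commutes (f : V →ₗ[K] V) (α : V ≃ₗ[K] V) : Prop :=
  ∀ v, α (f v) = f (α v)

/-- `X` is hyperinvariant: invariant under every endomorphism commuting with `f`. -/
def Hyperinv (f : V →ₗ[K] V) (X : Submodule K V) : Prop :=
  ∀ g : V →ₗ[K] V, (∀ v, g (f v) = f (g v)) → ∀ x ∈ X, g x ∈ X

/-- `X` is characteristic: `f`-invariant and invariant under every automorphism
commuting with `f`. -/
def Charinv (f : V →ₗ[K] V) (X : Submodule K V) : Prop :=
  (∀ x ∈ X, f x ∈ X) ∧ ∀ α : V ≃ₗ[K] V, Commutes f α → ∀ x ∈ X, α x ∈ X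

/-- The characteristic hull of a set `B`: the subspace spanned by all
`f^i (α b)`, `b ∈ B`, `α` an automorphism commuting with `f`. -/
def charHull (f : V →ₗ[K] V) (B : Set V) : Submodule K V :=
  Submodule.span K
    {y | ∃ b ∈ B, ∃ i : ℕ, ∃ α : V ≃ₗ[K] V, Commutes f α ∧ y = (f ^ i) (α b)}

/-- The `f`-cyclic subspace generated by `x`. -/
def cyc (f : V →ₗ[K] V) (x : V) : Submodule K V :=
  Submodule.span K (Set.range fun i : ℕ => (f ^ i) x)

/-- The `f`-invariant span of a set `B`. -/
def invSpan (f : V →ₗ[K] V) (B : Set V) : Submodule K V :=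
  Submodule.span K {y | ∃ b ∈ B, ∃ i : ℕ, y = (f ^ i) b}

/-- The exponent of `x`: the least `ℓ` with `f^ℓ x = 0`. -/
noncomputable def expnt (f : V →ₗ[K] V) (x : V) : ℕ :=
  sInf {ℓ : ℕ | (f ^ ℓ) x = 0}

/-- The height of `x`: the largest `q` with `x ∈ f^q V`. -/
noncomputable def hgt (f : V →ₗ[K] V) (x : V) : ℕ :=
  sSup {q : ℕ | x ∈ LinearMap.range (f ^ q)}

/-- `u` is a generator of `V`: `V = ⟨u⟩ ⊕ V₂` for some `f`-invariant `V₂`. -/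
def IsGenerator (f : V →ₗ[K] V) (u : V) : Prop :=
  u ≠ 0 ∧ ∃ V₂ : Submodule K V, (∀ x ∈ V₂, f x ∈ V₂) ∧ IsCompl (cyc f u) V₂

/-- `(u 0, …, u (m-1))` is a generator tuple of `V`:
`V = ⟨u 0⟩ ⊕ ⋯ ⊕ ⟨u (m-1)⟩` with nondecreasing exponents. -/
def IsGenTuple {m : ℕ} (f : V →ₗ[K] V) (u : Fin m → V) : Prop :=
  DirectSum.IsInternal (fun i => cyc f (u i)) ∧ Monotone fun i => expnt f (u i)

/-- The Ulm invariant `d(f,r) = dim ((ker f ⊓ f^{r-1} V) / (ker f ⊓ f^r V))`. -/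
noncomputable def ulm (f : V →ₗ[K] V) (r : ℕ) : ℕ :=
  Module.finrank K
    (↥(LinearMap.ker f ⊓ LinearMap.range (f ^ (r - 1))) ⧸
      Submodule.comap (LinearMap.ker f ⊓ LinearMap.range (f ^ (r - 1))).subtype
        (LinearMap.ker f ⊓ LinearMap.range (f ^ r)))

/-- The largest hyperinvariant subspace contained in `X`
(the sum of all hyperinvariant subspaces contained in `X`). -/
noncomputable def largestHyperinv (f : V →ₗ[K] V) (X : Submodule K V) : Submodule K V :=
  sSup {W : Submodule K V | Hyperinv f W ∧ W ≤ X}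

end Defs

/-!
The characteristic hull `X` of `w = f^(R-s) u + f^(S-q) v` is characteristic by construction.
Let `π_u, π_v` be projections onto `⟨u⟩, ⟨v⟩` along `f`-invariant complements; they commute with
`f`. Since `d(f,R) = 1`, every automorphism `α` commuting with `f` satisfies
`f^(R-1) (α u) ≡ c • f^(R-1) u (mod f^R V)` with `c ≠ 0`, and over `GF(2)` this forces `c = 1`;
likewise for `v`. Hence the map `T = (f^(s-1) π_u, f^(q-1) π_v)` sends every `α w` to
`(f^(R-1) u, f^(S-1) v)`, and as both entries are killed by `f`, `T` maps all of `X` into the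
line spanned by that pair. But `T (π_u w) = (f^(R-1) u, 0)` is off this line, so `π_u w ∉ X`.
-/

section

variable {K V : Type*} [Field K] [AddCommGroup V] [Module K V] {f : Module.End K V}

lemma pow_apply_pow_apply (a b : ℕ) (z : V) : (f ^ a) ((f ^ b) z) = (f ^ (a + b)) z := by
  rw [pow_add, Module.End.mul_apply]

lemma pow_apply_eq_zero_of_le {x : V} {n m : ℕ} (h : n ≤ m) (hx : (f ^ n) x = 0) :
    (f ^ m) x = 0 := by
  rw [← Nat.sub_add_cancel h, ← pow_apply_pow_apply, hx, map_zero]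

lemma apply_pow_pred_apply {n : ℕ} (hn : n ≠ 0) (x : V) : f ((f ^ (n - 1)) x) = (f ^ n) x := by
  rw [← Module.End.mul_apply, ← pow_succ', Nat.sub_add_cancel (Nat.one_le_iff_ne_zero.mpr hn)]

lemma pow_expnt_apply_eq_zero {x : V} (h : 0 < expnt f x) : (f ^ expnt f x) x = 0 :=
  Nat.sInf_mem (Nat.nonempty_of_pos_sInf h)

lemma pow_apply_ne_zero_of_lt_expnt {x : V} {n : ℕ} (h : n < expnt f x) : (f ^ n) x ≠ 0 :=
  fun h0 => (Nat.sInf_le h0).not_gt h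

lemma Commute.apply_pow_apply {g : Module.End K V} (h : Commute g f) (i : ℕ) (y : V) :
    g ((f ^ i) y) = (f ^ i) (g y) :=
  LinearMap.congr_fun (h.pow_right i).eq y

lemma Commute.pow_apply_eq_zero {g : Module.End K V} (h : Commute g f) {n : ℕ} {y : V}
    (hy : (f ^ n) y = 0) : (f ^ n) (g y) = 0 := by
  rw [← h.apply_pow_apply, hy, map_zero]

lemma Commutes.commute {α : V ≃ₗ[K] V} (hα : Commutes f α) : Commute (α : Module.End K V) f :=
  LinearMap.ext hα

lemma Commutes.apply_pow_apply {α : V ≃ₗ[K] V} (hα : Commutes f α) (i : ℕ) (y : V) :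
    α ((f ^ i) y) = (f ^ i) (α y) :=
  hα.commute.apply_pow_apply i y

lemma Commutes.symm {α : V ≃ₗ[K] V} (hα : Commutes f α) : Commutes f α.symm := fun y =>
  α.injective (by rw [hα, LinearEquiv.apply_symm_apply, LinearEquiv.apply_symm_apply])

lemma cyc_mem_invtSubmodule (x : V) : cyc f x ∈ Module.End.invtSubmodule f :=
  Submodule.span_le.mpr <| Set.range_subset_iff.mpr fun i =>
    Submodule.subset_span ⟨i + 1, by simp only [pow_succ', Module.End.mul_apply]⟩

lemma pow_apply_mem_cyc (x : V) (i : ℕ) : (f ^ i) x ∈ cyc f x :=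
  Submodule.subset_span ⟨i, rfl⟩

lemma cyc_le_ker_pow {x : V} {n : ℕ} (hx : (f ^ n) x = 0) : cyc f x ≤ ker (f ^ n) :=
  Submodule.span_le.mpr <| Set.range_subset_iff.mpr fun i => by
    rw [SetLike.mem_coe, mem_ker, pow_apply_pow_apply, add_comm,
      ← pow_apply_pow_apply, hx, map_zero]

lemma LinearMap.IsProj.pow_apply_eq_zero {x : V} {π : Module.End K V}
    (hπ : IsProj (cyc f x) π) {n : ℕ} (hxn : (f ^ n) x = 0) (y : V) :
    (f ^ n) (π y) = 0 :=
  cyc_le_ker_pow hxn (hπ.map_mem y)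

lemma IsGenerator.exists_isProj_commute {x : V} (hx : IsGenerator f x) :
    ∃ π : Module.End K V, IsProj (cyc f x) π ∧ Commute π f := by
  obtain ⟨-, W, hW, hxW⟩ := hx
  refine ⟨(cyc f x).projection W hxW, ⟨Submodule.projection_apply_mem hxW,
    fun z hz => Submodule.projection_apply_of_mem_left hxW hz⟩, ?_⟩
  rw [(Submodule.isIdempotentElem_projection hxW).commute_iff, Submodule.range_projection,
    Submodule.ker_projection]
  exact ⟨cyc_mem_invtSubmodule x, hW⟩

lemma pow_pred_notMem_range_pow {x : V} (hx : IsGenerator f x) {n : ℕ} (hxn : (f ^ n) x = 0)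
    (hxn' : (f ^ (n - 1)) x ≠ 0) : (f ^ (n - 1)) x ∉ range (f ^ n) := by
  rintro ⟨y, hy⟩
  obtain ⟨π, hπ, hπf⟩ := hx.exists_isProj_commute
  refine hxn' ?_
  rw [← hπ.map_id _ (pow_apply_mem_cyc x (n - 1)), ← hy, hπf.apply_pow_apply]
  exact hπ.pow_apply_eq_zero hxn y

lemma exists_smul_sub_mem_range_of_ulm_eq_one {n : ℕ} (hd : ulm f n = 1) {z₀ z : V}
    (hz₀ : z₀ ∈ ker f ⊓ range (f ^ (n - 1)))
    (hz₀' : z₀ ∉ range (f ^ n))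
    (hz : z ∈ ker f ⊓ range (f ^ (n - 1))) :
    ∃ c : K, c • z₀ - z ∈ range (f ^ n) := by
  set N := ker f ⊓ range (f ^ (n - 1))
  set M := (ker f ⊓ range (f ^ n)).comap N.subtype
  have hne : (M.mkQ ⟨z₀, hz₀⟩ : N ⧸ M) ≠ 0 := fun h0 =>
    hz₀' ((Submodule.Quotient.mk_eq_zero M).mp h0).2
  obtain ⟨c, hc⟩ := (finrank_eq_one_iff_of_nonzero' _ hne).mp hd (M.mkQ ⟨z, hz⟩)
  rw [Submodule.mkQ_apply, Submodule.mkQ_apply, ← Submodule.Quotient.mk_smul,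
    Submodule.Quotient.eq] at hc
  exact ⟨c, by simpa using (Submodule.mem_comap.mp hc).2⟩

lemma charinv_charHull (f : Module.End K V) (B : Set V) : Charinv f (charHull f B) := by
  refine ⟨fun x hx => ?_, fun β hβ x hx => ?_⟩
  · refine (Submodule.span_le (p := (charHull f B).comap f)).mpr ?_ hx
    rintro _ ⟨b, hb, i, α, hα, rfl⟩
    exact Submodule.subset_span ⟨b, hb, i + 1, α, hα, by rw [pow_succ', Module.End.mul_apply]⟩
  · refine (Submodule.span_le (p := (charHull f B).comap β.toLinearMap)).mpr ?_ hx
    rintro _ ⟨b, hb, i, α, hα, rfl⟩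
    refine Submodule.subset_span ⟨b, hb, i, α.trans β, fun y => ?_, ?_⟩
    · exact (congrArg β (hα y)).trans (hβ (α y))
    · exact hβ.apply_pow_apply i (α b)

lemma subset_charHull (f : Module.End K V) (B : Set V) : B ⊆ charHull f B := fun b hb =>
  Submodule.subset_span ⟨b, hb, 0, LinearEquiv.refl K V, fun _ => rfl, rfl⟩

lemma charHull_singleton_le_comap {W : Type*} [AddCommGroup W] [Module K W]
    {g : Module.End K W} {T : V →ₗ[K] W} (hT : g ∘ₗ T = T ∘ₗ f) {w : V} {c : W} (hc : g c = 0)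
    (hw : ∀ α : V ≃ₗ[K] V, Commutes f α → T (α w) = c) :
    charHull f {w} ≤ (K ∙ c).comap T := by
  refine Submodule.span_le.mpr ?_
  rintro _ ⟨b, rfl, i, α, hα, rfl⟩
  rw [SetLike.mem_coe, Submodule.mem_comap, ← comp_apply,
    ← Module.End.commute_pow_left_of_commute hT, comp_apply, hw α hα]
  rcases i with _ | i
  · exact Submodule.mem_span_singleton_self c
  · rw [pow_succ, Module.End.mul_apply, hc, map_zero]
    exact zero_mem _

lemma prodMk_zero_notMem_span_singleton {a b : V} (ha : a ≠ 0) (hb : b ≠ 0) :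
    (a, 0) ∉ K ∙ (a, b) := by
  intro h
  obtain ⟨t, ht⟩ := Submodule.mem_span_singleton.mp h
  obtain ⟨hta, htb⟩ := Prod.ext_iff.mp ht
  rcases smul_eq_zero.mp htb with rfl | rfl
  · exact ha (by simpa using hta.symm)
  · exact hb rfl

lemma not_hyperinv_charHull_singleton {A B g : Module.End K V} (hA : Commute A f)
    (hB : Commute B f) (hg : Commute g f) {w a b : V} (ha : f a = 0) (hb : f b = 0)
    (ha' : a ≠ 0) (hb' : b ≠ 0)
    (hw : ∀ α : V ≃ₗ[K] V, Commutes f α → A (α w) = a ∧ B (α w) = b)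
    (hgA : A (g w) = a) (hgB : B (g w) = 0) :
    ¬ Hyperinv f (charHull f {w}) := fun hH => by
  have hle := charHull_singleton_le_comap (g := f.prodMap f) (T := A.prod B) (w := w) (c := (a, b))
    (LinearMap.ext fun y => Prod.ext (LinearMap.congr_fun hA.eq y).symm
      (LinearMap.congr_fun hB.eq y).symm)
    (Prod.ext ha hb) fun α hα => Prod.ext (hw α hα).1 (hw α hα).2
  have hgw := hle (hH g (LinearMap.congr_fun hg.eq) w (subset_charHull f _ rfl))
  rw [Submodule.mem_comap, prod_apply, Function.prod, hgA, hgB] at hgw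
  exact prodMk_zero_notMem_span_singleton ha' hb' hgw

end

section

variable {V : Type*} [AddCommGroup V] [Module (ZMod 2) V] {f : Module.End (ZMod 2) V}

lemma pow_pred_sub_pow_pred_apply_mem_range {x : V} (hx : IsGenerator f x) {n : ℕ}
    (hxn : (f ^ n) x = 0) (hxn' : (f ^ (n - 1)) x ≠ 0) (hd : ulm f n = 1)
    {α : V ≃ₗ[ZMod 2] V} (hα : Commutes f α) :
    (f ^ (n - 1)) x - (f ^ (n - 1)) (α x) ∈ range (f ^ n) := by
  have hn : n ≠ 0 := by rintro rfl; exact hxn' hxn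
  have hnr := pow_pred_notMem_range_pow hx hxn hxn'
  obtain ⟨c, hc⟩ := exists_smul_sub_mem_range_of_ulm_eq_one hd
    (Submodule.mem_inf.mpr ⟨by rw [mem_ker, apply_pow_pred_apply hn, hxn], x, rfl⟩) hnr
    (Submodule.mem_inf.mpr ⟨by rw [mem_ker, apply_pow_pred_apply hn,
      ← hα.apply_pow_apply, hxn, map_zero], α x, rfl⟩)
  obtain rfl | rfl := (by decide : ∀ c : ZMod 2, c = 0 ∨ c = 1) c
  · rw [zero_smul, zero_sub, Submodule.neg_mem_iff] at hc
    obtain ⟨y, hy⟩ := hc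
    refine (hnr ⟨α.symm y, ?_⟩).elim
    rw [← hα.symm.apply_pow_apply, hy, hα.symm.apply_pow_apply, LinearEquiv.symm_apply_apply]
  · rwa [one_smul] at hc

lemma pow_pred_apply_proj_apply_eq {x : V} (hx : IsGenerator f x) {n : ℕ}
    (hxn : (f ^ n) x = 0) (hxn' : (f ^ (n - 1)) x ≠ 0) (hd : ulm f n = 1)
    {π : Module.End (ZMod 2) V} (hπ : IsProj (cyc f x) π) (hπf : Commute π f)
    {α : V ≃ₗ[ZMod 2] V} (hα : Commutes f α) :
    (f ^ (n - 1)) (π (α x)) = (f ^ (n - 1)) x := by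
  obtain ⟨y, hy⟩ := pow_pred_sub_pow_pred_apply_mem_range hx hxn hxn' hd hα
  have := congrArg π hy
  rw [hπf.apply_pow_apply, hπ.pow_apply_eq_zero hxn, map_sub,
    hπ.map_id _ (pow_apply_mem_cyc x _), hπf.apply_pow_apply] at this
  exact (sub_eq_zero.mp this.symm).symm

lemma pow_apply_proj_apply_add_eq {x : V} (hx : IsGenerator f x) {n : ℕ}
    (hxn : (f ^ n) x = 0) (hxn' : (f ^ (n - 1)) x ≠ 0) (hd : ulm f n = 1)
    {π : Module.End (ZMod 2) V} (hπ : IsProj (cyc f x) π) (hπf : Commute π f)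
    {α : V ≃ₗ[ZMod 2] V} (hα : Commutes f α) {k m : ℕ} (hk : 1 ≤ k) (hkn : k ≤ n) {y : V}
    (hy : (f ^ (k - 1 + m)) (π (α y)) = 0) :
    (f ^ (k - 1)) (π (α ((f ^ (n - k)) x + (f ^ m) y))) = (f ^ (n - 1)) x := by
  rw [map_add, map_add, map_add, hα.apply_pow_apply, hα.apply_pow_apply, hπf.apply_pow_apply,
    hπf.apply_pow_apply, pow_apply_pow_apply, pow_apply_pow_apply, hy, add_zero,
    show k - 1 + (n - k) = n - 1 by omega, pow_pred_apply_proj_apply_eq hx hxn hxn' hd hπ hπf hα]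

end

theorem stmt1_general (V : Type*) [AddCommGroup V] [Module (ZMod 2) V]
    (f : V →ₗ[ZMod 2] V)
    (R S : ℕ) (hdR : ulm f R = 1) (hdS : ulm f S = 1)
    (u v : V) (hu : IsGenerator f u) (hv : IsGenerator f v)
    (heu : expnt f u = R) (hev : expnt f v = S)
    (s q : ℕ) (hs0 : 0 < s) (hsR : s ≤ R) (hsq : s < q)
    (hlt : (R : ℤ) - s < (S : ℤ) - q) :
    Charinv f (charHull f {(f ^ (R - s)) u + (f ^ (S - q)) v}) ∧
      ¬ Hyperinv f (charHull f {(f ^ (R - s)) u + (f ^ (S - q)) v}) := by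
  have hfu : (f ^ R) u = 0 := heu ▸ pow_expnt_apply_eq_zero (by omega)
  have hfv : (f ^ S) v = 0 := hev ▸ pow_expnt_apply_eq_zero (by omega)
  have hfu' : (f ^ (R - 1)) u ≠ 0 := pow_apply_ne_zero_of_lt_expnt (by omega)
  have hfv' : (f ^ (S - 1)) v ≠ 0 := pow_apply_ne_zero_of_lt_expnt (by omega)
  obtain ⟨πu, hπu, hπuf⟩ := hu.exists_isProj_commute
  obtain ⟨πv, hπv, hπvf⟩ := hv.exists_isProj_commute
  set w := (f ^ (R - s)) u + (f ^ (S - q)) v with hw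
  have hwu : ∀ α, Commutes f α → (f ^ (s - 1)) (πu (α w)) = (f ^ (R - 1)) u := fun α hα =>
    pow_apply_proj_apply_add_eq hu hfu hfu' hdR hπu hπuf hα hs0 hsR
      (pow_apply_eq_zero_of_le (by omega) (hπu.pow_apply_eq_zero hfu _))
  have hwv : ∀ α, Commutes f α → (f ^ (q - 1)) (πv (α w)) = (f ^ (S - 1)) v := fun α hα => by
    rw [hw, add_comm]
    exact pow_apply_proj_apply_add_eq hv hfv hfv' hdS hπv hπvf hα (by omega) (by omega)
      ((hπvf.mul_left hα.commute).pow_apply_eq_zero (pow_apply_eq_zero_of_le (by omega) hfu))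
  refine ⟨charinv_charHull f _, not_hyperinv_charHull_singleton
    ((Commute.pow_self f _).mul_left hπuf) ((Commute.pow_self f _).mul_left hπvf) hπuf
    (by rw [apply_pow_pred_apply (by omega), hfu]) (by rw [apply_pow_pred_apply (by omega), hfv])
    hfu' hfv' (fun α hα => ⟨hwu α hα, hwv α hα⟩) ?_ ?_⟩
  · show (f ^ (s - 1)) (πu (πu w)) = (f ^ (R - 1)) u
    rw [hπu.map_id _ (hπu.map_mem w)]
    exact hwu (LinearEquiv.refl _ _) fun _ => rfl
  · have hvw : (f ^ (q - 1)) w = (f ^ (S - 1)) v := by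
      rw [hw, map_add, pow_apply_pow_apply, pow_apply_pow_apply,
        pow_apply_eq_zero_of_le (by omega) hfu, zero_add, show q - 1 + (S - q) = S - 1 by omega]
    show (f ^ (q - 1)) ((πv * πu) w) = 0
    rw [← (hπvf.mul_left hπuf).apply_pow_apply, hvw, Module.End.mul_apply, hπuf.apply_pow_apply,
      pow_apply_eq_zero_of_le (by omega) (hπu.pow_apply_eq_zero hfu v), map_zero]

theorem stmt1 (V : Type*) [AddCommGroup V] [Module (ZMod 2) V]
    [FiniteDimensional (ZMod 2) V] (f : V →ₗ[ZMod 2] V) (hf : IsNilpotent f)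
    (R S : ℕ) (hRS : R + 1 < S) (hdR : ulm f R = 1) (hdS : ulm f S = 1)
    (u v : V) (hu : IsGenerator f u) (hv : IsGenerator f v)
    (heu : expnt f u = R) (hev : expnt f v = S)
    (s q : ℕ) (hs0 : 0 < s) (hsR : s ≤ R) (hsq : s < q)
    (hlt : (R : ℤ) - s < (S : ℤ) - q) :
    Charinv f (charHull f {(f ^ (R - s)) u + (f ^ (S - q)) v}) ∧
      ¬ Hyperinv f (charHull f {(f ^ (R - s)) u + (f ^ (S - q)) v}) :=
  stmt1_general V f R S hdR hdS u v hu hv heu hev s q hs0 hsR hsq hlt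
end

section
/- Let X be a characteristic subspace of V with respect to f that is not hyperinvariant, and let X_H be the largest hyperinvariant subspace of V contained in X. Then X = ⟨X \ X_H⟩^c, and moreover the characteristic hull of X \ X_H equals its f-invariant span: ⟨X \ X_H⟩^c = ⟨X \ X_H⟩, where ⟨X \ X_H⟩ denotes the subspace spanned by {f^i(x) : x ∈ X \ X_H, i ≥ 0}. -/
open Module LinearMap

/-! If `W < X`, then `X \ W` already spans `X`: an element of `W` is the difference of `x + z`
and `z` for any `z ∈ X \ W`. With `W = X_H`, the chain `X ≤ ⟨X \ X_H⟩ ≤ invSpan ≤ charHull ≤ X`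
closes, the last step because `X` is characteristic. -/

theorem Submodule.span_sdiff_eq_of_lt {R M : Type*} [Ring R] [AddCommGroup M] [Module R M]
    {W X : Submodule R M} (hWX : W < X) : Submodule.span R ((X : Set M) \ W) = X := by
  refine le_antisymm (Submodule.span_le.2 Set.sdiff_subset) fun x hx => ?_
  by_cases hxW : x ∈ W
  · obtain ⟨z, hzX, hzW⟩ := SetLike.exists_of_lt hWX
    have hxz : x + z ∈ (X : Set M) \ W :=
      ⟨X.add_mem hx hzX, fun h => hzW (by simpa using W.sub_mem h hxW)⟩
    simpa using Submodule.sub_mem _ (Submodule.subset_span hxz) (Submodule.subset_span ⟨hzX, hzW⟩)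
  · exact Submodule.subset_span ⟨hx, hxW⟩

section

variable {K V : Type*} [Field K] [AddCommGroup V] [Module K V]

theorem hyperinv_sSup {f : V →ₗ[K] V} {S : Set (Submodule K V)} (hS : ∀ W ∈ S, Hyperinv f W) :
    Hyperinv f (sSup S) := fun g hg =>
  show sSup S ≤ (sSup S).comap g from
    sSup_le fun W hW =>
      (show W ≤ W.comap g from hS W hW g hg).trans (Submodule.comap_mono (le_sSup hW))

theorem hyperinv_largestHyperinv (f : V →ₗ[K] V) (X : Submodule K V) :
    Hyperinv f (largestHyperinv f X) :=
  hyperinv_sSup fun _ hW => hW.1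

theorem largestHyperinv_le (f : V →ₗ[K] V) (X : Submodule K V) : largestHyperinv f X ≤ X :=
  sSup_le fun _ hW => hW.2

theorem largestHyperinv_lt {f : V →ₗ[K] V} {X : Submodule K V} (hX : ¬ Hyperinv f X) :
    largestHyperinv f X < X :=
  (largestHyperinv_le f X).lt_of_ne fun h => hX (h ▸ hyperinv_largestHyperinv f X)

theorem span_le_invSpan (f : V →ₗ[K] V) (B : Set V) : Submodule.span K B ≤ invSpan f B :=
  Submodule.span_mono fun b hb => ⟨b, hb, 0, by simp⟩

theorem invSpan_le_charHull (f : V →ₗ[K] V) (B : Set V) : invSpan f B ≤ charHull f B :=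
  Submodule.span_mono fun _ ⟨b, hb, i, hy⟩ => ⟨b, hb, i, LinearEquiv.refl K V, fun _ => rfl, hy⟩

theorem charHull_le_of_charinv {f : V →ₗ[K] V} {X : Submodule K V} (hX : Charinv f X)
    {B : Set V} (hB : B ⊆ X) : charHull f B ≤ X :=
  Submodule.span_le.2 fun _ ⟨b, hb, i, α, hα, hy⟩ =>
    hy ▸ Module.End.pow_apply_mem_of_forall_mem i hX.1 _ (hX.2 α hα b (hB hb))

end

theorem stmt4_general {K V : Type*} [Field K] [AddCommGroup V] [Module K V]
    (f : V →ₗ[K] V)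
    (X : Submodule K V) (hX : Charinv f X) (hnh : ¬ Hyperinv f X) :
    X = charHull f ((X : Set V) \ (largestHyperinv f X : Set V)) ∧
      charHull f ((X : Set V) \ (largestHyperinv f X : Set V)) =
        invSpan f ((X : Set V) \ (largestHyperinv f X : Set V)) := by
  set B := (X : Set V) \ (largestHyperinv f X : Set V)
  have hspan : Submodule.span K B = X := Submodule.span_sdiff_eq_of_lt (largestHyperinv_lt hnh)
  have hchX : charHull f B ≤ X := charHull_le_of_charinv hX Set.sdiff_subset
  have hXinv : X ≤ invSpan f B := hspan ▸ span_le_invSpan f B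
  have hinvch := invSpan_le_charHull f B
  exact ⟨le_antisymm (hXinv.trans hinvch) hchX, le_antisymm (hchX.trans hXinv) hinvch⟩

theorem stmt4 {K V : Type*} [Field K] [AddCommGroup V] [Module K V]
    [FiniteDimensional K V] (f : V →ₗ[K] V) (hf : IsNilpotent f)
    (X : Submodule K V) (hX : Charinv f X) (hnh : ¬ Hyperinv f X) :
    X = charHull f ((X : Set V) \ (largestHyperinv f X : Set V)) ∧
      charHull f ((X : Set V) \ (largestHyperinv f X : Set V)) =
        invSpan f ((X : Set V) \ (largestHyperinv f X : Set V)) :=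
  stmt4_general f X hX hnh
end

section
/- Let (u_1, …, u_m) be a generator tuple of V with respect to f. If x = x_1 + ⋯ + x_m with x_i ∈ ⟨u_i⟩ for each i and x ≠ 0, then h(x) = min{h(x_i) : 1 ≤ i ≤ m, x_i ≠ 0} and e(x) = max{e(x_i) : 1 ≤ i ≤ m, x_i ≠ 0}. -/
open Module LinearMap

section Aux

variable {K V : Type*} [Field K] [AddCommGroup V] [Module K V]

lemma cyc_map_mem (f : V →ₗ[K] V) (w : V) {x : V} (hx : x ∈ cyc f w) : f x ∈ cyc f w := by
  have hle : Submodule.map f (cyc f w) ≤ cyc f w := by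
    rw [cyc, Submodule.map_span, Submodule.span_le]
    rintro y ⟨z, ⟨i, rfl⟩, rfl⟩
    exact Submodule.subset_span ⟨i + 1, show (f ^ (i + 1)) w = f ((f ^ i) w) by
      rw [pow_succ', Module.End.mul_apply]⟩
  exact hle ⟨x, hx, rfl⟩

lemma cyc_pow_mem (f : V →ₗ[K] V) (w : V) {x : V} (hx : x ∈ cyc f w) (q : ℕ) :
    (f ^ q) x ∈ cyc f w := by
  induction q with
  | zero => simpa using hx
  | succ n ih => rw [pow_succ', Module.End.mul_apply]; exact cyc_map_mem f w ih

lemma pow_expnt_apply (f : V →ₗ[K] V) (hf : IsNilpotent f) (x : V) :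
    (f ^ expnt f x) x = 0 := by
  obtain ⟨N, hN⟩ := hf
  have hmem : N ∈ {ℓ : ℕ | (f ^ ℓ) x = 0} := by
    simp only [Set.mem_setOf_eq, hN, LinearMap.zero_apply]
  exact Nat.sInf_mem ⟨N, hmem⟩

lemma expnt_le {f : V →ₗ[K] V} {x : V} {ℓ : ℕ} (h : (f ^ ℓ) x = 0) : expnt f x ≤ ℓ :=
  Nat.sInf_le h

lemma pow_apply_eq_zero_of_expnt_le {f : V →ₗ[K] V} (hf : IsNilpotent f) {x : V} {ℓ : ℕ}
    (h : expnt f x ≤ ℓ) : (f ^ ℓ) x = 0 := by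
  have h1 := pow_expnt_apply f hf x
  calc (f ^ ℓ) x = (f ^ (ℓ - expnt f x)) ((f ^ expnt f x) x) := by
        rw [← Module.End.mul_apply, ← pow_add, Nat.sub_add_cancel h]
    _ = 0 := by rw [h1, map_zero]

lemma range_pow_antitone (f : V →ₗ[K] V) {q r : ℕ} (h : q ≤ r) :
    LinearMap.range (f ^ r) ≤ LinearMap.range (f ^ q) := by
  rintro y ⟨z, rfl⟩
  exact ⟨(f ^ (r - q)) z, by rw [← Module.End.mul_apply, ← pow_add, Nat.add_sub_cancel' h]⟩

lemma hgt_bddAbove {f : V →ₗ[K] V} (hf : IsNilpotent f) {x : V} (hx : x ≠ 0) :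
    BddAbove {q : ℕ | x ∈ LinearMap.range (f ^ q)} := by
  obtain ⟨N, hN⟩ := hf
  refine ⟨N, fun q hq => ?_⟩
  by_contra hlt
  push_neg at hlt
  obtain ⟨z, hz⟩ := hq
  have hz0 : (f ^ q) z = 0 := by
    have h2 : (f ^ q) z = (f ^ (q - N)) ((f ^ N) z) := by
      rw [← Module.End.mul_apply, ← pow_add, Nat.sub_add_cancel hlt.le]
    rw [h2, hN]; simp
  exact hx (by rw [← hz, hz0])

lemma mem_range_pow_hgt {f : V →ₗ[K] V} (hf : IsNilpotent f) {x : V} (hx : x ≠ 0) :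
    x ∈ LinearMap.range (f ^ hgt f x) :=
  Nat.sSup_mem ⟨0, by simp⟩ (hgt_bddAbove hf hx)

lemma le_hgt {f : V →ₗ[K] V} (hf : IsNilpotent f) {x : V} (hx : x ≠ 0) {q : ℕ}
    (h : x ∈ LinearMap.range (f ^ q)) : q ≤ hgt f x :=
  le_csSup (hgt_bddAbove hf hx) h

lemma indep_sum_eq_zero {m : ℕ} {p : Fin m → Submodule K V} (h : iSupIndep p)
    (a : Fin m → V) (ha : ∀ i, a i ∈ p i) (hs : ∑ i, a i = 0) : ∀ i, a i = 0 := by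
  intro i
  have h2 : a i ∈ ⨆ j, ⨆ (_ : j ≠ i), p j := by
    have he : a i = -∑ j ∈ Finset.univ.erase i, a j := by
      rw [eq_neg_iff_add_eq_zero, ← hs, Finset.add_sum_erase _ _ (Finset.mem_univ i)]
    rw [he]
    exact neg_mem (Submodule.sum_mem _ fun j hj =>
      Submodule.mem_iSup_of_mem j (Submodule.mem_iSup_of_mem (Finset.ne_of_mem_erase hj) (ha j)))
  exact (Submodule.disjoint_def.mp (h i)) _ (ha i) h2

end Aux


theorem stmt5 {K V : Type*} [Field K] [AddCommGroup V] [Module K V]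
    [FiniteDimensional K V] (f : V →ₗ[K] V) (hf : IsNilpotent f)
    {m : ℕ} (u : Fin m → V) (hU : IsGenTuple f u)
    (x : Fin m → V) (hx : ∀ i, x i ∈ cyc f (u i)) (hne : ∑ i, x i ≠ 0) :
    hgt f (∑ i, x i) = sInf {n | ∃ i, x i ≠ 0 ∧ hgt f (x i) = n} ∧
      expnt f (∑ i, x i) = sSup {n | ∃ i, x i ≠ 0 ∧ expnt f (x i) = n} := by
  classical
  obtain ⟨hInt, _⟩ := hU
  have hInd := hInt.submodule_iSupIndep (A := fun i => cyc f (u i))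
  have hzero : ∀ (a : Fin m → V), (∀ i, a i ∈ cyc f (u i)) → ∑ i, a i = 0 → ∀ i, a i = 0 :=
    indep_sum_eq_zero hInd
  have hex : ∃ j, x j ≠ 0 := by
    by_contra hc
    push_neg at hc
    exact hne (Finset.sum_eq_zero fun i _ => hc i)
  obtain ⟨j, hj⟩ := hex
  constructor
  · -- height
    set Sh : Set ℕ := {n | ∃ i, x i ≠ 0 ∧ hgt f (x i) = n} with hSh
    have hShne : Sh.Nonempty := ⟨hgt f (x j), j, hj, rfl⟩
    obtain ⟨j1, hj1, hj1h⟩ := Nat.sInf_mem hShne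
    refine le_antisymm ?_ ?_
    · -- hgt sum ≤ sInf
      refine le_csInf hShne ?_
      rintro n ⟨i, hi, rfl⟩
      obtain ⟨y, hy⟩ := mem_range_pow_hgt hf hne
      have hytop : y ∈ ⨆ i, cyc f (u i) := by
        rw [hInt.submodule_iSup_eq_top]; trivial
      rw [Submodule.mem_iSup_iff_exists_finsupp] at hytop
      obtain ⟨c, hc, hcsum⟩ := hytop
      have hysum : y = ∑ k, c k := by
        rw [← hcsum, Finsupp.sum_fintype]
        intro k; rfl
      set q := hgt f (∑ i, x i) with hq
      have hdec : ∀ k, x k = (f ^ q) (c k) := by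
        have hsz : ∑ k, (x k - (f ^ q) (c k)) = 0 := by
          rw [Finset.sum_sub_distrib, ← map_sum, ← hysum, hy, sub_self]
        have := hzero (fun k => x k - (f ^ q) (c k))
          (fun k => Submodule.sub_mem _ (hx k) (cyc_pow_mem f (u k) (hc k) q)) hsz
        intro k
        exact sub_eq_zero.mp (this k)
      have : x i ∈ LinearMap.range (f ^ q) := ⟨c i, (hdec i).symm⟩
      exact le_hgt hf hi this
    · -- sInf ≤ hgt sum
      have hmem : (∑ i, x i) ∈ LinearMap.range (f ^ sInf Sh) := by
        apply Submodule.sum_mem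
        intro i _
        by_cases hi : x i = 0
        · rw [hi]; exact Submodule.zero_mem _
        · have h1 : sInf Sh ≤ hgt f (x i) := Nat.sInf_le ⟨i, hi, rfl⟩
          exact range_pow_antitone f h1 (mem_range_pow_hgt hf hi)
      exact le_hgt hf hne hmem
  · -- exponent
    obtain ⟨N, hN⟩ := hf
    set Se : Set ℕ := {n | ∃ i, x i ≠ 0 ∧ expnt f (x i) = n} with hSe
    have hSene : Se.Nonempty := ⟨expnt f (x j), j, hj, rfl⟩
    have hSebdd : BddAbove Se := by
      refine ⟨N, ?_⟩
      rintro n ⟨i, _, rfl⟩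
      exact expnt_le (by simp [hN])
    obtain ⟨j0, hj0, hj0e⟩ := Nat.sSup_mem hSene hSebdd
    refine le_antisymm ?_ ?_
    · refine expnt_le ?_
      rw [map_sum]
      refine Finset.sum_eq_zero fun i _ => ?_
      by_cases hi : x i = 0
      · rw [hi, map_zero]
      · exact pow_apply_eq_zero_of_expnt_le ⟨N, hN⟩ (le_csSup hSebdd ⟨i, hi, rfl⟩)
    · rw [← hj0e]
      set ℓ := expnt f (∑ i, x i) with hℓ
      have h0 : (f ^ ℓ) (∑ i, x i) = 0 := pow_expnt_apply f ⟨N, hN⟩ _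
      rw [map_sum] at h0
      have := hzero (fun i => (f ^ ℓ) (x i))
        (fun i => cyc_pow_mem f (u i) (hx i) ℓ) h0
      exact expnt_le (this j0)
end
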